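/- Let p₁, p₂, p₃ ∈ ℝ² be affinely independent points and let c(p₁, p₂, p₃) denote their circumcenter, i.e., the unique point equidistant from p₁, p₂ and p₃. Then, for fixed p₂ and p₃, the map p₁ ↦ c(p₁, p₂, p₃) is differentiable at every p₁ for which the three points are affinely independent, and its derivative C₁ = ∂c/∂p₁ (a 2×2 matrix) satisfies C₁ᵀ = [c−p₁ | c−p₁] · [p₂−p₁ | p₃−p₁]⁻¹, where [a | b] denotes the 2×2 matrix with columns a and b. Equivalently, for every direction h ∈ ℝ², the directional derivative v of c satisfies (p₂−p₁)ᵀ v = (c−p₁)ᵀ h and (p₃−p₁)ᵀ v = (c−p₁)ᵀ h. -/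

import Mathlib

/-!
Equidistance of `x` from `q` and `a` is the linear condition `⟪x, a - q⟫ = (‖a‖² - ‖q‖²) / 2`.
So, near `p₁`, the circumcenter solves a linear system `L q (c q) = β q` whose coefficients
depend smoothly on `q` and which is invertible because the triangle is nondegenerate (an open
condition); inverting it shows that `c` is differentiable. Differentiating the identity
`‖c q - q‖² = ‖c q - a‖²` at `p₁` then gives `⟪a - p₁, C h⟫ = ⟪c p₁ - p₁, h⟫` for `a = p₂, p₃`.
-/

open Filter Topology Module
open scoped RealInnerProductSpace

section LinearSystem

variable {𝕜 X E F : Type*} [NontriviallyNormedField 𝕜]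
  [NormedAddCommGroup X] [NormedSpace 𝕜 X] [NormedAddCommGroup E] [NormedSpace 𝕜 E]
  [CompleteSpace E] [NormedAddCommGroup F] [NormedSpace 𝕜 F]

theorem differentiableAt_of_eventually_apply_eq_of_isInvertible {A : X → E →L[𝕜] F}
    {b : X → F} {u : X → E} {p : X} (hA : DifferentiableAt 𝕜 A p) (hb : DifferentiableAt 𝕜 b p)
    (hAp : (A p).IsInvertible) (hu : ∀ᶠ q in 𝓝 p, A q (u q) = b q) :
    DifferentiableAt 𝕜 u p := by
  have hinv : ∀ᶠ q in 𝓝 p, (A q).IsInvertible :=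
    hA.continuousAt.preimage_mem_nhds (ContinuousLinearEquiv.isOpen.mem_nhds hAp)
  have hsol : (fun q => (A q).inverse (b q)) =ᶠ[𝓝 p] u := by
    filter_upwards [hinv, hu] with q hq hqu
    rw [← hqu, hq.inverse_apply_self]
  have hinverse : DifferentiableAt 𝕜 ContinuousLinearMap.inverse (A p) :=
    (hAp.contDiffAt_map_inverse (n := 1)).differentiableAt one_ne_zero
  exact ((hinverse.comp p hA).clm_apply hb).congr_of_eventuallyEq hsol.symm

end LinearSystem

section Equidistance

variable {E : Type*} [NormedAddCommGroup E] [InnerProductSpace ℝ E]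

theorem dist_eq_dist_iff_inner_sub_eq (x q a : E) :
    dist x q = dist x a ↔ ⟪x, a - q⟫ = (‖a‖ ^ 2 - ‖q‖ ^ 2) / 2 := by
  rw [← sq_eq_sq₀ dist_nonneg dist_nonneg, dist_eq_norm, dist_eq_norm, norm_sub_sq_real,
    norm_sub_sq_real, inner_sub_right]
  constructor <;> intro h <;> linarith

theorem inner_sub_apply_eq_of_eventually_dist_eq {c : E → E} {C : E →L[ℝ] E} {p a : E}
    (hC : HasFDerivAt c C p) (hca : ∀ᶠ q in 𝓝 p, dist (c q) q = dist (c q) a) (h : E) :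
    ⟪a - p, C h⟫ = ⟪c p - p, h⟫ := by
  have hψ := ((hC.sub (hasFDerivAt_id p)).norm_sq).sub (hC.sub_const a).norm_sq
  have hzero : (fun q => ‖c q - q‖ ^ 2 - ‖c q - a‖ ^ 2) =ᶠ[𝓝 p] fun _ => 0 := by
    filter_upwards [hca] with q hq
    rw [← dist_eq_norm, ← dist_eq_norm, hq, sub_self]
  have hD := congrArg (· h) (hψ.unique ((hasFDerivAt_const 0 p).congr_of_eventuallyEq hzero))
  simp only [sub_apply, smul_apply, ContinuousLinearMap.comp_apply, innerSL_apply_apply,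
    ContinuousLinearMap.id_apply, zero_apply, Pi.sub_apply, id_eq, nsmul_eq_mul, Nat.cast_ofNat,
    inner_sub_left, inner_sub_right] at hD ⊢
  linarith

variable [FiniteDimensional ℝ E]

theorem isInvertible_innerSL_prod_of_affineIndependent (hE : finrank ℝ E = 2) {q a b : E}
    (h : AffineIndependent ℝ ![q, a, b]) :
    ((innerSL ℝ (a - q)).prod (innerSL ℝ (b - q))).IsInvertible := by
  set L := (innerSL ℝ (a - q)).prod (innerSL ℝ (b - q))
  have hspan : vectorSpan ℝ (Set.range ![q, a, b]) = ⊤ :=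
    h.vectorSpan_eq_top_of_card_eq_finrank_add_one (by simp [hE])
  have hinj : Function.Injective L := by
    refine (injective_iff_map_eq_zero L).2 fun x hx => ?_
    simp only [L, ContinuousLinearMap.prod_apply, innerSL_apply_apply, Prod.mk_eq_zero] at hx
    have hle : vectorSpan ℝ (Set.range ![q, a, b]) ≤ (ℝ ∙ x)ᗮ := by
      rw [vectorSpan_range_eq_span_range_vsub_right ℝ _ 0, Submodule.span_le,
        Set.range_subset_iff]
      intro i
      rw [SetLike.mem_coe, Submodule.mem_orthogonal_singleton_iff_inner_left]
      fin_cases i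
      · simp
      · simpa using hx.1
      · simpa using hx.2
    have hx_perp : x ∈ (ℝ ∙ x)ᗮ := hle (hspan ▸ Submodule.mem_top)
    simpa using Submodule.mem_orthogonal_singleton_iff_inner_left.1 hx_perp
  exact ⟨(LinearMap.linearEquivOfInjective (L : E →ₗ[ℝ] ℝ × ℝ) hinj
    (by simp [hE])).toContinuousLinearEquiv, rfl⟩

theorem differentiableAt_of_eventually_equidistant (hE : finrank ℝ E = 2) {c : E → E}
    {p a b : E} (hp : AffineIndependent ℝ ![p, a, b])
    (hc : ∀ᶠ q in 𝓝 p, dist (c q) q = dist (c q) a ∧ dist (c q) q = dist (c q) b) :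
    DifferentiableAt ℝ c p := by
  have hinner : ∀ v : E, DifferentiableAt ℝ (fun q : E => innerSL ℝ (v - q)) p := fun v =>
    (innerSL ℝ).differentiableAt.comp p (differentiableAt_id.const_sub v)
  have hL : DifferentiableAt ℝ (fun q : E => (innerSL ℝ (a - q)).prod (innerSL ℝ (b - q))) p := by
    exact (ContinuousLinearMap.prodL ℝ).differentiableAt.comp p ((hinner a).prodMk (hinner b))
  have hβ : DifferentiableAt ℝ
      (fun q : E => ((‖a‖ ^ 2 - ‖q‖ ^ 2) / 2, (‖b‖ ^ 2 - ‖q‖ ^ 2) / 2)) p := by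
    have := differentiableAt_id.norm_sq ℝ (x := p)
    fun_prop
  refine differentiableAt_of_eventually_apply_eq_of_isInvertible hL hβ
    (isInvertible_innerSL_prod_of_affineIndependent hE hp) ?_
  filter_upwards [hc] with q ⟨hqa, hqb⟩
  simp only [ContinuousLinearMap.prod_apply, innerSL_apply_apply, real_inner_comm (c q)]
  exact Prod.ext ((dist_eq_dist_iff_inner_sub_eq _ _ _).1 hqa)
    ((dist_eq_dist_iff_inner_sub_eq _ _ _).1 hqb)

end Equidistance

/-- For fixed `p₂, p₃ ∈ ℝ²`, let `c q` be the circumcenter of the triple `(q, p₂, p₃)`,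
i.e. the unique point equidistant from `q`, `p₂` and `p₃` (defined whenever the triple is
affinely independent).  Then at every `p₁` where `(p₁, p₂, p₃)` is affinely independent,
the map `q ↦ c q` is differentiable, and its derivative `C₁` satisfies, for every
direction `h ∈ ℝ²`, the equations `(p₂ − p₁)ᵀ (C₁ h) = (c − p₁)ᵀ h` and
`(p₃ − p₁)ᵀ (C₁ h) = (c − p₁)ᵀ h`, which is equivalent to the matrix identity
`C₁ᵀ = [c−p₁ | c−p₁] · [p₂−p₁ | p₃−p₁]⁻¹`. -/
theorem circumcenter_hasFDerivAt_of_equidistant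
    (p₂ p₃ : EuclideanSpace ℝ (Fin 2))
    (c : EuclideanSpace ℝ (Fin 2) → EuclideanSpace ℝ (Fin 2))
    (hc : ∀ q : EuclideanSpace ℝ (Fin 2), AffineIndependent ℝ ![q, p₂, p₃] →
      dist (c q) q = dist (c q) p₂ ∧ dist (c q) q = dist (c q) p₃)
    (p₁ : EuclideanSpace ℝ (Fin 2))
    (h₁ : AffineIndependent ℝ ![p₁, p₂, p₃]) :
    ∃ C : EuclideanSpace ℝ (Fin 2) →L[ℝ] EuclideanSpace ℝ (Fin 2),
      HasFDerivAt c C p₁ ∧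
      ∀ h : EuclideanSpace ℝ (Fin 2),
        (inner ℝ (p₂ - p₁) (C h) : ℝ) = (inner ℝ (c p₁ - p₁) h : ℝ) ∧
        (inner ℝ (p₃ - p₁) (C h) : ℝ) = (inner ℝ (c p₁ - p₁) h : ℝ) := by
  have hopen : IsOpen {q | AffineIndependent ℝ ![q, p₂, p₃]} :=
    isOpen_setOfPred_affineIndependent.preimage (by fun_prop)
  have hnear : ∀ᶠ q in 𝓝 p₁, dist (c q) q = dist (c q) p₂ ∧ dist (c q) q = dist (c q) p₃ :=
    (hopen.eventually_mem h₁).mono hc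
  have hC := (differentiableAt_of_eventually_equidistant finrank_euclideanSpace_fin h₁
    hnear).hasFDerivAt
  exact ⟨_, hC, fun h =>
    ⟨inner_sub_apply_eq_of_eventually_dist_eq hC (hnear.mono fun _ hq => hq.1) h,
      inner_sub_apply_eq_of_eventually_dist_eq hC (hnear.mono fun _ hq => hq.2) h⟩⟩
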